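/- Let Γ = 1 − Σ_{i=0}^{3} |τᵢ⟩⟨τᵢ| be the projector onto the complement of the UPB span in (ℂ²)^⊗3. Then the state ρ = Γ/4 has positive semi-definite partial transpose with respect to each of the three qubit subsystems. -/
import Mathlib


open Matrix Finset Real
open scoped ComplexOrder Kronecker

noncomputable section

/-- The three-qubit Hilbert space index: bit triples. -/
abbrev Q3 := Fin 2 × Fin 2 × Fin 2

/-- Inner product `⟨v|w⟩ = ∑ᵢ v(i)* w(i)`. -/
def inn {n : Type*} [Fintype n] (v w : n → ℂ) : ℂ := ∑ i, star (v i) * w i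

/-- Rank-one projector `|v⟩⟨v|`. -/
def proj {n : Type*} (v : n → ℂ) : Matrix n n ℂ := Matrix.vecMulVec v (star v)

/-- Product vector `|a⟩⊗|b⟩⊗|c⟩` on three qubits. -/
def prod3 (a b c : Fin 2 → ℂ) : Q3 → ℂ := fun x => a x.1 * b x.2.1 * c x.2.2

def ket0 : Fin 2 → ℂ := ![1, 0]
def ket1 : Fin 2 → ℂ := ![0, 1]
def ketP : Fin 2 → ℂ := ![(1 / Real.sqrt 2 : ℝ), (1 / Real.sqrt 2 : ℝ)]
def ketM : Fin 2 → ℂ := ![(1 / Real.sqrt 2 : ℝ), (-(1 / Real.sqrt 2) : ℝ)]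
/-- `|0̄⟩ = cos(π/8)|0⟩ + sin(π/8)|1⟩`. -/
def ket0b : Fin 2 → ℂ := ![(Real.cos (π / 8) : ℝ), (Real.sin (π / 8) : ℝ)]
/-- `|1̄⟩ = -sin(π/8)|0⟩ + cos(π/8)|1⟩`. -/
def ket1b : Fin 2 → ℂ := ![(-Real.sin (π / 8) : ℝ), (Real.cos (π / 8) : ℝ)]
/-- `|+̄⟩ = sin(π/8)|0⟩ + cos(π/8)|1⟩`. -/
def ketPb : Fin 2 → ℂ := ![(Real.sin (π / 8) : ℝ), (Real.cos (π / 8) : ℝ)]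
/-- `|−̄⟩ = cos(π/8)|0⟩ - sin(π/8)|1⟩`. -/
def ketMb : Fin 2 → ℂ := ![(Real.cos (π / 8) : ℝ), (-Real.sin (π / 8) : ℝ)]

/-- The four vectors of the Shifts-type unextendible product basis. -/
def tau : Fin 4 → Q3 → ℂ
  | 0 => prod3 ket0b ket1 ketP
  | 1 => prod3 ketPb ket0 ket1
  | 2 => prod3 ket1b ketP ket0
  | 3 => prod3 ketMb ketM ketM

/-- Pauli X. -/
def PX : Matrix (Fin 2) (Fin 2) ℂ := !![0, 1; 1, 0]
/-- Pauli Y. -/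
def PY : Matrix (Fin 2) (Fin 2) ℂ := !![0, -Complex.I; Complex.I, 0]
/-- Pauli Z. -/
def PZ : Matrix (Fin 2) (Fin 2) ℂ := !![1, 0; 0, -1]

/-- The projector onto the subspace complementary to the span of the UPB. -/
def Gam : Matrix Q3 Q3 ℂ := 1 - ∑ i : Fin 4, proj (tau i)

/-- Partial transpose with respect to the first qubit. -/
def pt1 (M : Matrix Q3 Q3 ℂ) : Matrix Q3 Q3 ℂ :=
  Matrix.of fun x y => M (y.1, x.2.1, x.2.2) (x.1, y.2.1, y.2.2)

/-- Partial transpose with respect to the second qubit. -/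
def pt2 (M : Matrix Q3 Q3 ℂ) : Matrix Q3 Q3 ℂ :=
  Matrix.of fun x y => M (x.1, y.2.1, x.2.2) (y.1, x.2.1, y.2.2)

/-- Partial transpose with respect to the third qubit. -/
def pt3 (M : Matrix Q3 Q3 ℂ) : Matrix Q3 Q3 ℂ :=
  Matrix.of fun x y => M (x.1, x.2.1, y.2.2) (y.1, y.2.1, x.2.2)

/-! ### Auxiliary lemmas -/

lemma star_ket0 : ∀ i, star (ket0 i) = ket0 i := by
  intro i; fin_cases i <;> simp [ket0]

lemma star_ket1 : ∀ i, star (ket1 i) = ket1 i := by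
  intro i; fin_cases i <;> simp [ket1]

lemma star_ketP : ∀ i, star (ketP i) = ketP i := by
  intro i; fin_cases i <;> simp [ketP]

lemma star_ketM : ∀ i, star (ketM i) = ketM i := by
  intro i; fin_cases i <;> simp [ketM]

lemma star_ket0b : ∀ i, star (ket0b i) = ket0b i := by
  intro i; fin_cases i <;> simp [ket0b]

lemma star_ket1b : ∀ i, star (ket1b i) = ket1b i := by
  intro i; fin_cases i <;> simp [ket1b]

lemma star_ketPb : ∀ i, star (ketPb i) = ketPb i := by
  intro i; fin_cases i <;> simp [ketPb]

lemma star_ketMb : ∀ i, star (ketMb i) = ketMb i := by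
  intro i; fin_cases i <;> simp [ketMb]

/-- Inner product of product vectors factorizes. -/
lemma inn_prod3 (a b c a' b' c' : Fin 2 → ℂ) :
    inn (prod3 a b c) (prod3 a' b' c') = inn a a' * inn b b' * inn c c' := by
  simp only [inn, prod3, Fintype.sum_prod_type, Fin.sum_univ_two, star_mul']
  ring

lemma r2 : ((1 / Real.sqrt 2 : ℝ) : ℂ) * ((1 / Real.sqrt 2 : ℝ) : ℂ) = (1/2 : ℂ) := by
  rw [← Complex.ofReal_mul]
  have h : (1 / Real.sqrt 2) * (1 / Real.sqrt 2) = 1 / 2 := by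
    rw [div_mul_div_comm, one_mul, Real.mul_self_sqrt (by norm_num : (0:ℝ) ≤ 2)]
  rw [h]; norm_num

lemma cs2 : ((Real.cos (π/8) : ℝ) : ℂ) * ((Real.cos (π/8) : ℝ) : ℂ)
    + ((Real.sin (π/8) : ℝ) : ℂ) * ((Real.sin (π/8) : ℝ) : ℂ) = 1 := by
  rw [← Complex.ofReal_mul, ← Complex.ofReal_mul, ← Complex.ofReal_add]
  norm_cast
  rw [← Real.cos_sq_add_sin_sq (π/8)]; ring

lemma inn_ket0_ket0 : inn ket0 ket0 = 1 := by
  simp [inn, Fin.sum_univ_two, ket0]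
lemma inn_ket1_ket1 : inn ket1 ket1 = 1 := by
  simp [inn, Fin.sum_univ_two, ket1]
lemma inn_ketP_ketP : inn ketP ketP = 1 := by
  simp only [inn, Fin.sum_univ_two, ketP, Matrix.cons_val_zero, Matrix.cons_val_one,
    Matrix.head_cons, Complex.star_def, Complex.conj_ofReal]
  rw [r2]; norm_num
lemma inn_ketM_ketM : inn ketM ketM = 1 := by
  simp only [inn, Fin.sum_univ_two, ketM, Matrix.cons_val_zero, Matrix.cons_val_one,
    Matrix.head_cons, Complex.star_def, Complex.conj_ofReal]
  have : ((-(1 / Real.sqrt 2) : ℝ) : ℂ) = -((1 / Real.sqrt 2 : ℝ) : ℂ) := by push_cast; ring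
  rw [this, neg_mul_neg, r2]; norm_num
lemma inn_ket0b_ket0b : inn ket0b ket0b = 1 := by
  simp only [inn, Fin.sum_univ_two, ket0b, Matrix.cons_val_zero, Matrix.cons_val_one,
    Matrix.head_cons, Complex.star_def, Complex.conj_ofReal]
  exact cs2
lemma inn_ket1b_ket1b : inn ket1b ket1b = 1 := by
  simp only [inn, Fin.sum_univ_two, ket1b, Matrix.cons_val_zero, Matrix.cons_val_one,
    Matrix.head_cons, Complex.star_def, Complex.conj_ofReal]
  push_cast
  rw [← cs2]; push_cast; ring
lemma inn_ketPb_ketPb : inn ketPb ketPb = 1 := by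
  simp only [inn, Fin.sum_univ_two, ketPb, Matrix.cons_val_zero, Matrix.cons_val_one,
    Matrix.head_cons, Complex.star_def, Complex.conj_ofReal]
  rw [← cs2]; push_cast; ring
lemma inn_ketMb_ketMb : inn ketMb ketMb = 1 := by
  simp only [inn, Fin.sum_univ_two, ketMb, Matrix.cons_val_zero, Matrix.cons_val_one,
    Matrix.head_cons, Complex.star_def, Complex.conj_ofReal]
  rw [← cs2]; push_cast; ring

lemma inn_ket0_ket1 : inn ket0 ket1 = 0 := by
  simp [inn, Fin.sum_univ_two, ket0, ket1]
lemma inn_ket1_ket0 : inn ket1 ket0 = 0 := by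
  simp [inn, Fin.sum_univ_two, ket0, ket1]
lemma inn_ketP_ketM : inn ketP ketM = 0 := by
  simp only [inn, Fin.sum_univ_two, ketP, ketM, Matrix.cons_val_zero, Matrix.cons_val_one,
    Matrix.head_cons, Complex.star_def, Complex.conj_ofReal]
  push_cast; ring
lemma inn_ketM_ketP : inn ketM ketP = 0 := by
  simp only [inn, Fin.sum_univ_two, ketP, ketM, Matrix.cons_val_zero, Matrix.cons_val_one,
    Matrix.head_cons, Complex.star_def, Complex.conj_ofReal]
  push_cast; ring
lemma inn_ket0b_ket1b : inn ket0b ket1b = 0 := by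
  simp only [inn, Fin.sum_univ_two, ket0b, ket1b, Matrix.cons_val_zero, Matrix.cons_val_one,
    Matrix.head_cons, Complex.star_def, Complex.conj_ofReal]
  push_cast; ring
lemma inn_ket1b_ket0b : inn ket1b ket0b = 0 := by
  simp only [inn, Fin.sum_univ_two, ket0b, ket1b, Matrix.cons_val_zero, Matrix.cons_val_one,
    Matrix.head_cons, Complex.star_def, Complex.conj_ofReal]
  push_cast; ring
lemma inn_ketPb_ketMb : inn ketPb ketMb = 0 := by
  simp only [inn, Fin.sum_univ_two, ketPb, ketMb, Matrix.cons_val_zero, Matrix.cons_val_one,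
    Matrix.head_cons, Complex.star_def, Complex.conj_ofReal]
  push_cast; ring
lemma inn_ketMb_ketPb : inn ketMb ketPb = 0 := by
  simp only [inn, Fin.sum_univ_two, ketPb, ketMb, Matrix.cons_val_zero, Matrix.cons_val_one,
    Matrix.head_cons, Complex.star_def, Complex.conj_ofReal]
  push_cast; ring

/-- The UPB vectors are orthonormal. -/
lemma inn_tau (i j : Fin 4) : inn (tau i) (tau j) = if i = j then 1 else 0 := by
  fin_cases i <;> fin_cases j <;>
    simp [tau, inn_prod3, inn_ket0_ket0, inn_ket1_ket1, inn_ketP_ketP, inn_ketM_ketM,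
      inn_ket0b_ket0b, inn_ket1b_ket1b, inn_ketPb_ketPb, inn_ketMb_ketMb,
      inn_ket0_ket1, inn_ket1_ket0, inn_ketP_ketM, inn_ketM_ketP,
      inn_ket0b_ket1b, inn_ket1b_ket0b, inn_ketPb_ketMb, inn_ketMb_ketPb]

lemma proj_mul_proj (v w : Q3 → ℂ) :
    proj v * proj w = inn v w • Matrix.vecMulVec v (star w) := by
  ext x y
  simp only [proj, Matrix.mul_apply, Matrix.vecMulVec_apply, Pi.star_apply,
    Matrix.smul_apply, smul_eq_mul, inn, Finset.sum_mul]
  exact Finset.sum_congr rfl fun k _ => by ring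

lemma proj_isHermitian (v : Q3 → ℂ) : (proj v).IsHermitian := by
  ext x y
  simp only [proj, Matrix.conjTranspose_apply, Matrix.vecMulVec_apply, Pi.star_apply,
    star_mul', star_star]
  ring

/-- Abbreviation for the sum of projectors. -/
def SS : Matrix Q3 Q3 ℂ := ∑ i : Fin 4, proj (tau i)

lemma SS_mul_SS : SS * SS = SS := by
  unfold SS
  rw [Finset.sum_mul_sum]
  rw [Finset.sum_congr rfl fun i _ => Finset.sum_congr rfl fun j _ => proj_mul_proj _ _]
  rw [Finset.sum_congr rfl fun i _ => Finset.sum_congr rfl fun j _ => by rw [inn_tau]]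
  simp [Finset.sum_ite_eq, proj]

lemma Gam_isHermitian : Gam.IsHermitian := by
  unfold Gam
  apply Matrix.IsHermitian.sub Matrix.isHermitian_one
  show (∑ i : Fin 4, proj (tau i))ᴴ = _
  rw [Matrix.conjTranspose_sum]
  exact Finset.sum_congr rfl fun i _ => proj_isHermitian _

lemma Gam_idem : Gam * Gam = Gam := by
  show (1 - SS) * (1 - SS) = 1 - SS
  simp only [sub_mul, mul_sub, SS_mul_SS, one_mul, mul_one]
  abel

lemma Gam_posSemidef : Gam.PosSemidef := by
  have h := Matrix.posSemidef_conjTranspose_mul_self Gam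
  rwa [Gam_isHermitian.eq, Gam_idem] at h

lemma rho_posSemidef : ((1 / 4 : ℂ) • Gam).PosSemidef := by
  have h := Matrix.posSemidef_conjTranspose_mul_self ((1 / 2 : ℂ) • Gam)
  have : ((1 / 2 : ℂ) • Gam)ᴴ * ((1 / 2 : ℂ) • Gam) = (1 / 4 : ℂ) • Gam := by
    rw [Matrix.conjTranspose_smul, Gam_isHermitian.eq, Matrix.smul_mul, Matrix.mul_smul,
      smul_smul, Gam_idem]
    norm_num
  rwa [this] at h

/-! ### Partial transpose invariance -/

lemma pt1_proj (a b c : Fin 2 → ℂ) (ha : ∀ i, star (a i) = a i) :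
    pt1 (proj (prod3 a b c)) = proj (prod3 a b c) := by
  ext x y
  simp only [pt1, Matrix.of_apply, proj, Matrix.vecMulVec_apply, Pi.star_apply, prod3,
    star_mul', ha]
  ring

lemma pt2_proj (a b c : Fin 2 → ℂ) (hb : ∀ i, star (b i) = b i) :
    pt2 (proj (prod3 a b c)) = proj (prod3 a b c) := by
  ext x y
  simp only [pt2, Matrix.of_apply, proj, Matrix.vecMulVec_apply, Pi.star_apply, prod3,
    star_mul', hb]
  ring

lemma pt3_proj (a b c : Fin 2 → ℂ) (hc : ∀ i, star (c i) = c i) :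
    pt3 (proj (prod3 a b c)) = proj (prod3 a b c) := by
  ext x y
  simp only [pt3, Matrix.of_apply, proj, Matrix.vecMulVec_apply, Pi.star_apply, prod3,
    star_mul', hc]
  ring

lemma pt1_one : pt1 (1 : Matrix Q3 Q3 ℂ) = 1 := by
  ext x y
  simp only [pt1, Matrix.of_apply, Matrix.one_apply, Prod.ext_iff]
  by_cases h1 : x.1 = y.1 <;> by_cases h2 : x.2.1 = y.2.1 <;> by_cases h3 : x.2.2 = y.2.2 <;>
    simp_all [eq_comm]

lemma pt2_one : pt2 (1 : Matrix Q3 Q3 ℂ) = 1 := by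
  ext x y
  simp only [pt2, Matrix.of_apply, Matrix.one_apply, Prod.ext_iff]
  by_cases h1 : x.1 = y.1 <;> by_cases h2 : x.2.1 = y.2.1 <;> by_cases h3 : x.2.2 = y.2.2 <;>
    simp_all [eq_comm]

lemma pt3_one : pt3 (1 : Matrix Q3 Q3 ℂ) = 1 := by
  ext x y
  simp only [pt3, Matrix.of_apply, Matrix.one_apply, Prod.ext_iff]
  by_cases h1 : x.1 = y.1 <;> by_cases h2 : x.2.1 = y.2.1 <;> by_cases h3 : x.2.2 = y.2.2 <;>
    simp_all [eq_comm]

lemma pt1_Gam : pt1 ((1 / 4 : ℂ) • Gam) = (1 / 4 : ℂ) • Gam := by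
  ext x y
  simp only [pt1, Matrix.of_apply, Matrix.smul_apply, Gam, Matrix.sub_apply,
    Matrix.sum_apply]
  congr 1
  rw [show ((1 : Matrix Q3 Q3 ℂ) (y.1, x.2.1, x.2.2) (x.1, y.2.1, y.2.2)) =
      pt1 (1 : Matrix Q3 Q3 ℂ) x y from rfl, pt1_one]
  congr 1
  refine Finset.sum_congr rfl fun i _ => ?_
  have : ∀ M : Matrix Q3 Q3 ℂ, M (y.1, x.2.1, x.2.2) (x.1, y.2.1, y.2.2) = pt1 M x y :=
    fun M => rfl
  rw [this (proj (tau i))]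
  fin_cases i
  · exact congrFun (congrFun (pt1_proj ket0b ket1 ketP star_ket0b) x) y
  · exact congrFun (congrFun (pt1_proj ketPb ket0 ket1 star_ketPb) x) y
  · exact congrFun (congrFun (pt1_proj ket1b ketP ket0 star_ket1b) x) y
  · exact congrFun (congrFun (pt1_proj ketMb ketM ketM star_ketMb) x) y

lemma pt2_Gam : pt2 ((1 / 4 : ℂ) • Gam) = (1 / 4 : ℂ) • Gam := by
  ext x y
  simp only [pt2, Matrix.of_apply, Matrix.smul_apply, Gam, Matrix.sub_apply,
    Matrix.sum_apply]
  congr 1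
  rw [show ((1 : Matrix Q3 Q3 ℂ) (x.1, y.2.1, x.2.2) (y.1, x.2.1, y.2.2)) =
      pt2 (1 : Matrix Q3 Q3 ℂ) x y from rfl, pt2_one]
  congr 1
  refine Finset.sum_congr rfl fun i _ => ?_
  have : ∀ M : Matrix Q3 Q3 ℂ, M (x.1, y.2.1, x.2.2) (y.1, x.2.1, y.2.2) = pt2 M x y :=
    fun M => rfl
  rw [this (proj (tau i))]
  fin_cases i
  · exact congrFun (congrFun (pt2_proj ket0b ket1 ketP star_ket1) x) y
  · exact congrFun (congrFun (pt2_proj ketPb ket0 ket1 star_ket0) x) y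
  · exact congrFun (congrFun (pt2_proj ket1b ketP ket0 star_ketP) x) y
  · exact congrFun (congrFun (pt2_proj ketMb ketM ketM star_ketM) x) y

lemma pt3_Gam : pt3 ((1 / 4 : ℂ) • Gam) = (1 / 4 : ℂ) • Gam := by
  ext x y
  simp only [pt3, Matrix.of_apply, Matrix.smul_apply, Gam, Matrix.sub_apply,
    Matrix.sum_apply]
  congr 1
  rw [show ((1 : Matrix Q3 Q3 ℂ) (x.1, x.2.1, y.2.2) (y.1, y.2.1, x.2.2)) =
      pt3 (1 : Matrix Q3 Q3 ℂ) x y from rfl, pt3_one]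
  congr 1
  refine Finset.sum_congr rfl fun i _ => ?_
  have : ∀ M : Matrix Q3 Q3 ℂ, M (x.1, x.2.1, y.2.2) (y.1, y.2.1, x.2.2) = pt3 M x y :=
    fun M => rfl
  rw [this (proj (tau i))]
  fin_cases i
  · exact congrFun (congrFun (pt3_proj ket0b ket1 ketP star_ketP) x) y
  · exact congrFun (congrFun (pt3_proj ketPb ket0 ket1 star_ket1) x) y
  · exact congrFun (congrFun (pt3_proj ket1b ketP ket0 star_ket0) x) y
  · exact congrFun (congrFun (pt3_proj ketMb ketM ketM star_ketM) x) y

/-- The bound entangled state `ρ = Γ/4` has positive partial transpose with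
respect to each of the three qubits. -/
theorem stmt_5 :
    (pt1 ((1 / 4 : ℂ) • Gam)).PosSemidef ∧
      (pt2 ((1 / 4 : ℂ) • Gam)).PosSemidef ∧
      (pt3 ((1 / 4 : ℂ) • Gam)).PosSemidef := by
  refine ⟨?_, ?_, ?_⟩
  · rw [pt1_Gam]; exact rho_posSemidef
  · rw [pt2_Gam]; exact rho_posSemidef
  · rw [pt3_Gam]; exact rho_posSemidef
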